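/- One has D_k(ε) = δ_{k,n}, and for every l ∈ {0,1,...,k-1} and every w ∈ X^{(k-l)} with first letter x_1, one has D_l(w) = (x_1 - l) · D_{l+1}(σ(w)) + c_l(x_1). -/

import Mathlib

open Finset

namespace Secretary

/-- Binomial coefficient on integers: zero when `b < 0` or `b > a`. -/
noncomputable def Cb (a b : ℤ) : ℝ :=
  if 0 ≤ b ∧ b ≤ a then (Nat.choose a.toNat b.toNat : ℝ) else 0

/-- The value `π(i)` of a permutation of `{1,...,n}` in 1-based indexing. -/
def pv (n : ℕ) (π : Equiv.Perm (Fin n)) (i : ℕ) : ℕ :=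
  if h : i - 1 < n then ((π ⟨i - 1, h⟩ : Fin n) : ℕ) + 1 else 0

/-- The relative rank `ρ_π(i)`: the number of `j ∈ {1,...,i}` with `π(j) ≤ π(i)`. -/
def rho (n : ℕ) (π : Equiv.Perm (Fin n)) (i : ℕ) : ℕ :=
  ((Finset.Icc 1 i).filter fun j => pv n π j ≤ pv n π i).card

/-- Extension of a sequence `s` with `s (k+1) = n - 1`. -/
def sExt (n k : ℕ) (s : ℕ → ℕ) (l : ℕ) : ℕ := if l = k + 1 then n - 1 else s l

/-- `i` is a `(π, l, w)`-element. -/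
def IsElem (n k : ℕ) (s : ℕ → ℕ) (π : Equiv.Perm (Fin n)) (l i : ℕ) : Prop :=
  sExt n k s l < i ∧ i ≤ sExt n k s (l + 1) ∧ rho n π i ≤ l

/-- `l` is a `w`-threshold of `π`. -/
def IsThreshold (n k : ℕ) (s : ℕ → ℕ) (π : Equiv.Perm (Fin n)) (l : ℕ) : Prop :=
  1 ≤ l ∧ l ≤ k ∧ ∃ i, IsElem n k s π l i

open Classical in
/-- `π` is a lucky permutation for the sequence `w = s`. -/
def Lucky (n k : ℕ) (s : ℕ → ℕ) (π : Equiv.Perm (Fin n)) : Prop :=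
  if ∃ l, IsThreshold n k s π l then
    pv n π (sInf {i | IsElem n k s π (sInf {l | IsThreshold n k s π l}) i}) ≤ k
  else pv n π n ≤ k

/-- The maps `r_l` (first argument an integer `l ≤ k`). -/
noncomputable def rr (n k : ℕ) (l : ℤ) (x : ℕ) : ℝ :=
  if l < 0 then 0
  else if l = 0 then
    1 / (x : ℝ) - (k : ℝ) / n - Cb ((n : ℤ) - x - 1) k / ((x : ℝ) * Cb n k)
      - (1 / Cb n k) * ∑ j ∈ Finset.Icc 1 x, Cb ((n : ℤ) - j - 1) ((k : ℤ) - 1) / (j : ℝ)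
  else
    ((Nat.factorial (x - l.toNat - 1) : ℝ) / (Nat.factorial x : ℝ)) *
      (1 - (1 / ((l : ℝ) * Cb n x)) *
        ∑ j ∈ Finset.range (l.toNat + 1),
          ((l : ℝ) - j) * Cb k j * Cb ((n : ℤ) - k) ((x : ℤ) - j))

/-- The constant `δ_{k,n}`. -/
noncomputable def delta (n k : ℕ) : ℝ :=
  if k = 1 then -(1 / (n : ℝ)) * ∑ j ∈ Finset.Icc 1 (n - 1), (1 : ℝ) / j
  else (Nat.factorial (n - k) : ℝ) / (Nat.factorial n : ℝ)

/-- The maps `d_l` for `0 ≤ l ≤ k`. -/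
noncomputable def d (n k : ℕ) (l x : ℕ) : ℝ :=
  if l = 0 then
    -1 + (k : ℝ) * x / n + Cb ((n : ℤ) - x - 1) k / Cb n k
      + ((x : ℝ) / Cb n k) * ∑ j ∈ Finset.Icc 1 x, Cb ((n : ℤ) - j - 1) ((k : ℤ) - 1) / (j : ℝ)
  else if l = 1 then
    -((k : ℝ) / n) - (1 / Cb n k) * ∑ j ∈ Finset.Icc 1 x, Cb ((n : ℤ) - j - 1) ((k : ℤ) - 1) / (j : ℝ)
  else
    ((k : ℝ) * (Nat.factorial x : ℝ) * (Nat.factorial (n - l - x) : ℝ) /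
        ((l : ℝ) * ((l : ℝ) - 1) * (Nat.factorial n : ℝ))) *
      ∑ j ∈ Finset.range (l - 1), Cb ((k : ℤ) - 1) j * Cb ((n : ℤ) - k) ((x : ℤ) + l - j - 1)

/-- The maps `c_l(x) = d_l(x - l)`. -/
noncomputable def c (n k l x : ℕ) : ℝ := d n k l (x - l)

/-- The constant `ξ_{k,n}`. -/
noncomputable def xi (n k : ℕ) : ℝ :=
  (k : ℝ) * (Nat.factorial (n - k - 1) : ℝ) / (Nat.factorial n : ℝ)

/-- `w` (given as a 1-indexed function) is a word in `X^{(k-l)}`, i.e. its `j`-th letter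
belongs to `X_{l+j} = {l+j, ..., n-1}` for `1 ≤ j ≤ k - l`. -/
def memX (n k l : ℕ) (w : ℕ → ℕ) : Prop :=
  ∀ j ∈ Finset.Icc 1 (k - l), l + j ≤ w j ∧ w j ≤ n - 1

/-- The left-shift operator removing the first `l` letters of a word. -/
def shift (l : ℕ) (w : ℕ → ℕ) : ℕ → ℕ := fun j => w (l + j)

/-- The maps `R_{l,j}`. -/
noncomputable def Rmap (n k l : ℕ) (w : ℕ → ℕ) (j : ℕ) : ℝ :=
  if 1 ≤ j ∧ j ≤ k - l then
    rr n k ((l : ℤ) + j - 1) (w j)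
      - rr n k ((l : ℤ) + j - 1) (if j = k - l then n - 1 else w (j + 1))
  else 0

/-- The maps `Γ_{l,j,j'}`. -/
noncomputable def Gam (n k l j j' : ℕ) (w : ℕ → ℕ) : ℝ :=
  if 1 ≤ j ∧ j ≤ j' ∧ j' ≤ k - l then
    ∏ t ∈ Finset.Icc j j', ((w t : ℝ) - l - t + 1)
  else 1

/-- The maps `T_l`. -/
noncomputable def Tmap (n k l : ℕ) (w : ℕ → ℕ) : ℝ :=
  (∑ j ∈ Finset.Icc 1 (k - l), Rmap n k l w j * Gam n k l 1 j w)
    + xi n k * Gam n k l 1 (k - l) w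

/-- The maps `D_l(w) = r_{l-1}(x_1) - T_l(w)`, with `x_1 := n-1` when `l = k`. -/
noncomputable def Dmap (n k l : ℕ) (w : ℕ → ℕ) : ℝ :=
  rr n k ((l : ℤ) - 1) (if l = k then n - 1 else w 1) - Tmap n k l w

/-- The maps `F_{l,w}(x) = -c_{l-1}(x) - x·D_l(w)`. -/
noncomputable def Fmap (n k l : ℕ) (w : ℕ → ℕ) (x : ℕ) : ℝ :=
  -(c n k (l - 1) x) - (x : ℝ) * Dmap n k l w

/-- The maps `a_l`. -/
noncomputable def amap (n k l x : ℕ) : ℝ :=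
  (1 / Cb n x) * ∑ j ∈ Finset.range (l + 1), Cb k j * Cb ((n : ℤ) - k) ((x : ℤ) - j)

/-- The maps `b_l`. -/
noncomputable def bmap (n k l x : ℕ) : ℝ :=
  (1 / ((l : ℝ) * Cb n x)) *
    ∑ j ∈ Finset.range (l + 1), (j : ℝ) * Cb k j * Cb ((n : ℤ) - k) ((x : ℤ) - j)

/-- `π ∈ S(l0, i0)`: `π` is lucky for `s`, `l0` is the smallest `s`-threshold of `π`,
and `i0` is the smallest `(π, l0, s)`-element. -/
def SMem (n k : ℕ) (s : ℕ → ℕ) (l0 i0 : ℕ) (π : Equiv.Perm (Fin n)) : Prop :=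
  Lucky n k s π ∧ IsLeast {l | IsThreshold n k s π l} l0 ∧
    IsLeast {i | IsElem n k s π l0 i} i0

/-- `π ∈ S(Y, Y', l0, i0)`. -/
def SYYMem (n k : ℕ) (s : ℕ → ℕ) (Y Y' : Finset ℕ) (l0 i0 : ℕ) (π : Equiv.Perm (Fin n)) :
    Prop :=
  SMem n k s l0 i0 π ∧ ((Finset.Icc 1 i0).image (pv n π)) ∩ Finset.Icc 1 k = Y ∧
    ((Finset.Icc 1 i0).image (pv n π)) ∩ Finset.Icc (k + 1) n = Y'

/-!
Peeling off the first letter of `w` gives `Γ_{l,1,j+1}(w) = (x_1 - l) Γ_{l+1,1,j}(σ w)` and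
`R_{l,j+1}(w) = R_{l+1,j}(σ w)`, hence `T_l(w) = (x_1 - l) (R_{l,1}(w) + T_{l+1}(σ w))`. In
`D_l(w) - (x_1 - l) D_{l+1}(σ w)` the terms involving the second letter then cancel, and what is
left is `r_{l-1}(x_1) - (x_1 - l) r_l(x_1)`. So the recursion is the scalar identity
`r_{l-1}(x) - (x - l) r_l(x) = c_l(x)`, proved separately for `l = 0`, for `l = 1` (where it
amounts to `C(n-k,x) C(n,k) = C(n-x,k) C(n,x)` and Pascal's rule) and for `l ≥ 2` (where the
difference of the two weighted sums in `r_{l-1}` and `r_l` collapses by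
`j C(k,j) = k C(k-1,j-1)`). The base case is a direct evaluation: `T_k = ξ`, and for `k ≥ 2`
every term of the sum in `r_{k-1}(n-1)` vanishes.
-/

open scoped Nat

lemma Cb_natCast (a b : ℕ) : Cb a b = a.choose b := by
  unfold Cb
  split_ifs with h
  · simp
  · rw [Nat.choose_eq_zero_of_lt (by omega), Nat.cast_zero]

lemma Cb_of_neg {a b : ℤ} (h : b < 0) : Cb a b = 0 := by
  rw [Cb, if_neg (by omega)]

lemma Cb_of_lt {a b : ℤ} (h : a < b) : Cb a b = 0 := by
  rw [Cb, if_neg (by omega)]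

lemma Cb_zero_right {a : ℤ} (ha : 0 ≤ a) : Cb a 0 = 1 := by
  rw [Cb, if_pos ⟨le_rfl, ha⟩]
  simp

lemma Cb_pos {a b : ℕ} (h : b ≤ a) : 0 < Cb a b := by
  rw [Cb_natCast]
  exact_mod_cast Nat.choose_pos h

lemma mul_Cb_eq_mul_Cb_sub_one (a b : ℤ) : (b : ℝ) * Cb a b = a * Cb (a - 1) (b - 1) := by
  by_cases h : 1 ≤ b ∧ b ≤ a
  · obtain ⟨m, rfl⟩ : ∃ m : ℕ, a = m + 1 := ⟨(a - 1).toNat, by omega⟩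
    obtain ⟨i, rfl⟩ : ∃ i : ℕ, b = i + 1 := ⟨(b - 1).toNat, by omega⟩
    rw [add_sub_cancel_right, add_sub_cancel_right, ← Nat.cast_add_one, ← Nat.cast_add_one,
      Cb_natCast, Cb_natCast]
    exact_mod_cast (mul_comm _ _).trans (Nat.add_one_mul_choose_eq m i).symm
  · rcases Int.lt_or_le b 1 with hb | hb
    · rcases Int.lt_or_le b 0 with hb' | hb'
      · rw [Cb_of_neg hb', Cb_of_neg (by omega), mul_zero, mul_zero]
      · obtain rfl : b = 0 := by omega
        simp [Cb_of_neg]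
    · rw [Cb_of_lt (by omega), Cb_of_lt (by omega), mul_zero, mul_zero]

lemma Cb_add_Cb_sub_one {a : ℤ} (ha : 0 ≤ a) (b : ℤ) :
    Cb a b + Cb a (b - 1) = Cb (a + 1) b := by
  lift a to ℕ using ha
  rcases lt_trichotomy b 0 with hb | rfl | hb
  · rw [Cb_of_neg hb, Cb_of_neg (by omega), Cb_of_neg hb, add_zero]
  · rw [zero_sub, Cb_of_neg (b := -1) (by norm_num), add_zero, Cb_zero_right (by omega),
      Cb_zero_right (by omega)]
  · lift b to ℕ using hb.le
    obtain ⟨i, rfl⟩ : ∃ i, b = i + 1 := ⟨b - 1, by omega⟩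
    rw [Nat.cast_add_one, add_sub_cancel_right, ← Nat.cast_add_one, ← Nat.cast_add_one,
      Cb_natCast, Cb_natCast, Cb_natCast, Nat.choose_succ_succ', Nat.cast_add, add_comm]

lemma Cb_sub_mul_Cb_comm (n k x : ℕ) :
    Cb ((n : ℤ) - k) x * Cb n k = Cb ((n : ℤ) - x) k * Cb n x := by
  by_cases h : k + x ≤ n
  · rw [← Nat.cast_sub (by omega), ← Nat.cast_sub (by omega), Cb_natCast, Cb_natCast,
      Cb_natCast, Cb_natCast]
    have hk := Nat.choose_mul (n := n) (Nat.le_add_right k x)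
    have hx := Nat.choose_mul (n := n) (Nat.le_add_left x k)
    rw [Nat.add_sub_cancel_left] at hk
    rw [Nat.add_sub_cancel, ← Nat.choose_symm_add] at hx
    exact_mod_cast by rw [mul_comm, ← hk, hx, mul_comm]
  · rw [Cb_of_lt (a := (n : ℤ) - k) (b := x) (by omega),
      Cb_of_lt (a := (n : ℤ) - x) (b := k) (by omega), zero_mul, zero_mul]

lemma prod_Icc_one_succ (f : ℕ → ℝ) (j : ℕ) :
    ∏ t ∈ Icc 1 (j + 1), f t = f 1 * ∏ t ∈ Icc 1 j, f (t + 1) := by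
  rw [← mul_prod_Ioc_eq_prod_Icc (by omega), ← Icc_add_one_left_eq_Ioc, ← map_add_right_Icc,
    prod_map]
  rfl

lemma sum_Icc_one_succ (f : ℕ → ℝ) (j : ℕ) :
    ∑ t ∈ Icc 1 (j + 1), f t = f 1 + ∑ t ∈ Icc 1 j, f (t + 1) := by
  rw [← add_sum_Ioc_eq_sum_Icc (by omega), ← Icc_add_one_left_eq_Ioc, ← map_add_right_Icc,
    sum_map]
  rfl

lemma Gam_one_succ {n k l j : ℕ} (hj : j < k - l) (w : ℕ → ℕ) :
    Gam n k l 1 (j + 1) w = ((w 1 : ℝ) - l) * Gam n k (l + 1) 1 j (shift 1 w) := by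
  rw [Gam, if_pos ⟨le_rfl, by omega, by omega⟩, prod_Icc_one_succ]
  rcases Nat.eq_zero_or_pos j with rfl | hj0
  · simp [Gam]
  · rw [Gam, if_pos ⟨le_rfl, hj0, by omega⟩]
    simp only [shift]
    congr 1
    · push_cast; ring
    · refine prod_congr rfl fun t _ => ?_
      rw [add_comm 1 t]
      push_cast; ring

lemma Rmap_succ (n k l : ℕ) (w : ℕ → ℕ) {j : ℕ} (hj : 1 ≤ j) :
    Rmap n k l w (j + 1) = Rmap n k (l + 1) (shift 1 w) j := by
  unfold Rmap shift
  by_cases hjk : j + 1 ≤ k - l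
  · rw [if_pos (show 1 ≤ j + 1 ∧ j + 1 ≤ k - l from ⟨by omega, hjk⟩),
      if_pos (show 1 ≤ j ∧ j ≤ k - (l + 1) from ⟨hj, by omega⟩),
      if_congr (show j + 1 = k - l ↔ j = k - (l + 1) by omega) rfl rfl,
      show (l : ℤ) + (j + 1 : ℕ) - 1 = (l + 1 : ℕ) + j - 1 by push_cast; ring,
      add_comm 1 j, add_comm 1 (j + 1)]
  · rw [if_neg (by omega), if_neg (by omega)]

lemma Rmap_one {n k l : ℕ} (hlk : l < k) (w : ℕ → ℕ) :
    Rmap n k l w 1 =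
      rr n k l (w 1) - rr n k l (if l + 1 = k then n - 1 else shift 1 w 1) := by
  rw [Rmap, if_pos ⟨le_rfl, by omega⟩, if_congr (show 1 = k - l ↔ l + 1 = k by omega) rfl rfl,
    Nat.cast_one, add_sub_cancel_right]
  rfl

lemma Tmap_eq_mul_Tmap_shift {n k l : ℕ} (hlk : l < k) (w : ℕ → ℕ) :
    Tmap n k l w =
      ((w 1 : ℝ) - l) * (Rmap n k l w 1 + Tmap n k (l + 1) (shift 1 w)) := by
  obtain ⟨m, hm, hm'⟩ : ∃ m, k - l = m + 1 ∧ k - (l + 1) = m :=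
    ⟨k - l - 1, by omega, by omega⟩
  unfold Tmap
  rw [hm, hm', sum_Icc_one_succ, Gam_one_succ (by omega), Gam_one_succ (by omega)]
  have hsum : ∑ j ∈ Icc 1 m, Rmap n k l w (j + 1) * Gam n k l 1 (j + 1) w =
      ((w 1 : ℝ) - l) * ∑ j ∈ Icc 1 m,
        Rmap n k (l + 1) (shift 1 w) j * Gam n k (l + 1) 1 j (shift 1 w) := by
    rw [mul_sum]
    refine sum_congr rfl fun j hj => ?_
    rw [Rmap_succ _ _ _ _ (mem_Icc.1 hj).1, Gam_one_succ (by simp at hj; omega)]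
    ring
  rw [hsum, show Gam n k (l + 1) 1 0 (shift 1 w) = 1 by simp [Gam]]
  ring

lemma Dmap_sub_mul_Dmap_shift {n k l : ℕ} (hlk : l < k) (w : ℕ → ℕ) :
    Dmap n k l w - ((w 1 : ℝ) - l) * Dmap n k (l + 1) (shift 1 w) =
      rr n k ((l : ℤ) - 1) (w 1) - ((w 1 : ℝ) - l) * rr n k l (w 1) := by
  unfold Dmap
  rw [if_neg hlk.ne, Tmap_eq_mul_Tmap_shift hlk, Rmap_one hlk, Nat.cast_add_one,
    add_sub_cancel_right]
  ring

lemma rr_natCast {l : ℕ} (hl : 1 ≤ l) (n k x : ℕ) :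
    rr n k l x = ((x - l - 1)! / x ! : ℝ) * (1 - 1 / (l * Cb n x) *
      ∑ j ∈ range (l + 1), ((l : ℝ) - j) * Cb k j * Cb ((n : ℤ) - k) ((x : ℤ) - j)) := by
  rw [rr, if_neg (by omega), if_neg (by omega)]
  simp only [Int.toNat_natCast, Int.cast_natCast]

lemma rr_neg_one_sub_mul_rr_zero (n k : ℕ) {x : ℕ} (hx : 1 ≤ x) :
    rr n k (-1) x - x * rr n k 0 x = d n k 0 x := by
  have hx0 : (x : ℝ) ≠ 0 := by positivity
  simp only [rr, d, if_pos (show (-1 : ℤ) < 0 by norm_num), lt_irrefl, if_false, if_true]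
  field_simp
  ring

lemma rr_zero_sub_mul_rr_one {n k x : ℕ} (hkn : k ≤ n) (hx : 2 ≤ x) (hxn : x < n) :
    rr n k 0 x - (x - 1) * rr n k 1 x = d n k 1 (x - 1) := by
  obtain ⟨y, rfl⟩ : ∃ y, x = y + 2 := ⟨x - 2, by omega⟩
  have hCk := (Cb_pos hkn).ne'
  have hCx := (Cb_pos (show y + 2 ≤ n by omega)).ne'
  have hkey : Cb ((n : ℤ) - k) (y + 2 : ℕ) / Cb n (y + 2 : ℕ) =
      (Cb ((n : ℤ) - (y + 2 : ℕ) - 1) k + Cb ((n : ℤ) - (y + 2 : ℕ) - 1) (k - 1)) /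
        Cb n k := by
    rw [Cb_add_Cb_sub_one (by omega), sub_add_cancel, div_eq_div_iff hCx hCk,
      Cb_sub_mul_Cb_comm]
  have hfac : ((y + 2)! : ℝ) = (y + 2) * (y + 1) * y ! := by
    push_cast [Nat.factorial_succ]; ring
  have hr1 := rr_natCast (l := 1) le_rfl n k (y + 2)
  rw [Nat.cast_one, show y + 2 - 1 - 1 = y by omega] at hr1
  rw [hr1, show y + 2 - 1 = y + 1 by omega]
  simp only [rr, d, lt_irrefl, if_false, if_true, one_ne_zero, sum_range_succ, sum_range_zero]
  rw [sum_Icc_succ_top (show 1 ≤ y + 2 by omega), show y + 1 + 1 = y + 2 by omega]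
  simp only [Nat.cast_zero, Nat.cast_one, sub_zero, sub_self, zero_mul, zero_add, one_mul,
    Cb_zero_right (Int.natCast_nonneg k), add_zero, hfac, one_div_mul_eq_div]
  rw [hkey]
  push_cast
  field_simp
  ring

lemma sum_range_mul_Cb (n k x m : ℕ) :
    ∑ j ∈ range (m + 1), (j : ℝ) * (Cb k j * Cb ((n : ℤ) - k) ((x : ℤ) - j)) =
      k * ∑ i ∈ range m, Cb ((k : ℤ) - 1) i * Cb ((n : ℤ) - k) ((x : ℤ) - i - 1) := by
  rw [sum_range_succ', mul_sum]
  simp only [Nat.cast_zero, zero_mul, add_zero, ← mul_assoc]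
  refine sum_congr rfl fun i _ => ?_
  rw [← Int.cast_natCast (R := ℝ) (i + 1), mul_Cb_eq_mul_Cb_sub_one]
  push_cast
  ring_nf

lemma rr_sub_mul_rr_of_two_le {n k l x : ℕ} (hl : 2 ≤ l) (hlx : l < x) (hxn : x ≤ n) :
    rr n k (l - 1 : ℕ) x - (x - l) * rr n k l x = d n k l (x - l) := by
  obtain ⟨m, rfl⟩ : ∃ m, l = m + 2 := ⟨l - 2, by omega⟩
  set f : ℕ → ℝ := fun j => Cb k j * Cb ((n : ℤ) - k) ((x : ℤ) - j) with hf
  set E := ∑ i ∈ range (m + 1), Cb ((k : ℤ) - 1) i * Cb ((n : ℤ) - k) ((x : ℤ) - i - 1)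
  have hweight : ∀ (a : ℝ) (p : ℕ),
      ∑ j ∈ range p, (a - j) * Cb k j * Cb ((n : ℤ) - k) ((x : ℤ) - j) =
        a * ∑ j ∈ range p, f j - ∑ j ∈ range p, (j : ℝ) * f j := by
    intro a p
    rw [mul_sum, ← sum_sub_distrib]
    exact sum_congr rfl fun j _ => by simp only [hf]; ring
  have hB : ∑ j ∈ range (m + 2), (j : ℝ) * f j = k * E := sum_range_mul_Cb n k x (m + 1)
  have hd : ∑ j ∈ range (m + 1), Cb ((k : ℤ) - 1) j *
      Cb ((n : ℤ) - k) (((x - (m + 2) : ℕ) : ℤ) + (m + 2 : ℕ) - j - 1) = E :=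
    sum_congr rfl fun j _ => by rw [Nat.cast_sub hlx.le, sub_add_cancel]
  have hfx : ((x - (m + 2))! : ℝ) = (x - (m + 2) : ℕ) * (x - (m + 2) - 1)! := by
    rw [← Nat.cast_mul, ← Nat.mul_factorial_pred (by omega)]
  have hfn : (n ! : ℝ) = Cb n x * x ! * (n - x)! := by
    rw [Cb_natCast]; exact_mod_cast (Nat.choose_mul_factorial_mul_factorial hxn).symm
  have hCx := (Cb_pos hxn).ne'
  rw [rr_natCast (by omega), rr_natCast (by omega), d, if_neg (by omega), if_neg (by omega),
    show m + 2 - 1 = m + 1 from rfl, show m + 1 + 1 = m + 2 from rfl, hweight, hweight,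
    sum_range_succ f (m + 2), sum_range_succ (fun j : ℕ => (j : ℝ) * f j) (m + 2), hB, hd,
    show n - (m + 2) - (x - (m + 2)) = n - x by omega,
    show x - (m + 1) - 1 = x - (m + 2) by omega, hfx, hfn]
  push_cast [Nat.cast_sub hlx.le]
  rw [show (m : ℝ) + 2 - 1 = m + 1 by ring]
  field_simp
  ring

lemma rr_pred_sub_mul_rr {n k l x : ℕ} (hkn : k ≤ n) (hlx : l < x) (hxn : x < n) :
    rr n k ((l : ℤ) - 1) x - ((x : ℝ) - l) * rr n k l x = c n k l x := by
  rw [c]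
  obtain rfl | rfl | hl : l = 0 ∨ l = 1 ∨ 2 ≤ l := by omega
  · simpa using rr_neg_one_sub_mul_rr_zero n k (x := x) (by omega)
  · simpa using rr_zero_sub_mul_rr_one hkn (by omega) hxn
  · rw [← rr_sub_mul_rr_of_two_le hl hlx hxn.le, Nat.cast_sub (by omega), Nat.cast_one]

lemma Tmap_self (n k : ℕ) (w : ℕ → ℕ) : Tmap n k k w = xi n k := by
  simp [Tmap, Gam]

lemma rr_pred_self {n k : ℕ} (hk : 2 ≤ k) (hkn : k < n) :
    rr n k ((k : ℤ) - 1) (n - 1) = ((n - k - 1)! / (n - 1)! : ℝ) := by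
  have hsum : ∑ j ∈ range (k - 1 + 1), (((k - 1 : ℕ) : ℝ) - j) * Cb k j *
      Cb ((n : ℤ) - k) (((n - 1 : ℕ) : ℤ) - j) = 0 := by
    refine sum_eq_zero fun j hj => ?_
    rcases (Nat.lt_succ_iff.1 (mem_range.1 hj)).eq_or_lt with rfl | hj
    · rw [sub_self, zero_mul, zero_mul]
    · rw [Cb_of_lt (a := (n : ℤ) - k) (b := ((n - 1 : ℕ) : ℤ) - j) (by omega), mul_zero]
  rw [show (k : ℤ) - 1 = (k - 1 : ℕ) by omega, rr_natCast (by omega), hsum,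
    show n - 1 - (k - 1) - 1 = n - k - 1 by omega]
  simp

lemma Dmap_self {n k : ℕ} (hk : 1 ≤ k) (hkn : k < n) (w : ℕ → ℕ) :
    Dmap n k k w = delta n k := by
  rw [Dmap, if_pos rfl, Tmap_self]
  rcases hk.eq_or_lt with rfl | hk2
  · obtain ⟨m, rfl⟩ : ∃ m, n = m + 2 := ⟨n - 2, by omega⟩
    have hsum : ∑ j ∈ Icc 1 (m + 2 - 1),
        Cb ((m + 2 : ℕ) - (j : ℤ) - 1) ((1 : ℕ) - 1) / (j : ℝ) =
          ∑ j ∈ Icc 1 (m + 1), 1 / (j : ℝ) :=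
      sum_congr rfl fun j hj => by
        rw [Nat.cast_one, sub_self, Cb_zero_right (by simp at hj; omega)]
    have hfac : ((m + 2)! : ℝ) = (m + 2) * (m + 1) * m ! := by
      push_cast [Nat.factorial_succ]; ring
    rw [show ((1 : ℕ) : ℤ) - 1 = 0 by norm_num, rr, if_neg (lt_irrefl 0), if_pos rfl, delta,
      if_pos rfl, xi, hsum,
      Cb_of_lt (a := (m + 2 : ℕ) - ((m + 2 - 1 : ℕ) : ℤ) - 1) (b := (1 : ℕ)) (by omega),
      Cb_natCast, Nat.choose_one_right, show m + 2 - 1 = m + 1 by omega,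
      show m + 1 - 1 = m from rfl, hfac]
    push_cast
    field_simp
    ring
  · have hfn : (n ! : ℝ) = n * (n - 1)! := by
      rw [← Nat.cast_mul, Nat.mul_factorial_pred (by omega)]
    have hfnk : ((n - k)! : ℝ) = (n - k : ℕ) * (n - k - 1)! := by
      rw [← Nat.cast_mul, Nat.mul_factorial_pred (by omega)]
    have hn : (n : ℝ) ≠ 0 := by exact_mod_cast (show n ≠ 0 by omega)
    rw [rr_pred_self hk2 hkn, delta, if_neg hk2.ne', xi, hfn, hfnk]
    push_cast [Nat.cast_sub hkn.le]
    field_simp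

theorem Dmap_rec (n k : ℕ) (hk : 1 ≤ k) (hkn : k < n) :
    Dmap n k k (fun _ => 0) = delta n k ∧
    ∀ l : ℕ, l < k → ∀ w : ℕ → ℕ, memX n k l w →
      Dmap n k l w = ((w 1 : ℝ) - l) * Dmap n k (l + 1) (shift 1 w) + c n k l (w 1) := by
  refine ⟨Dmap_self hk hkn _, fun l hlk w hw => ?_⟩
  obtain ⟨hlw, hwn⟩ := hw 1 (mem_Icc.2 ⟨le_rfl, by omega⟩)
  linear_combination Dmap_sub_mul_Dmap_shift hlk w +
    rr_pred_sub_mul_rr (k := k) hkn.le (show l < w 1 by omega) (show w 1 < n by omega)
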